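/- Let [k_0,…,k_m] and [k'_0,…,k'_n] be continued fractions with k_0, k'_0 ≥ 0, intermediate partial quotients ≥ 1, and last partial quotients ≥ 2 (when m, n ≥ 1 respectively). If there is an index i with k_j = k'_j for j < i, and k_i < k'_i when i is even or k_i > k'_i when i is odd, then [k_0,…,k_m] < [k'_0,…,k'_n] as rational numbers. That is, the alternating lexicographic ordering of partial-quotient sequences agrees with the ordering of the rational values. -/

import Mathlib

open List

/-- `r`-value of an LR-string (`true` = R, `false` = L):
`r(ε) = 1`, `r(SL) = r(S) - 2^(-|SL|)`, `r(SR) = r(S) + 2^(-|SR|)`. -/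
def rval (S : List Bool) : ℚ :=
  1 + ∑ i ∈ Finset.range S.length,
      (if S.getD i false then ((2:ℚ)^(i+1))⁻¹ else -((2:ℚ)^(i+1))⁻¹)

/-- Generalized strings: LR-strings plus the formal symbols `R⁻¹ = inv true`
and `L⁻¹ = inv false`. -/
inductive Gen where
  | inv : Bool → Gen
  | str : List Bool → Gen
deriving DecidableEq

/-- Left parent: `P_L(ε) = R⁻¹`, `P_L(SL) = P_L(S)`, `P_L(SR) = S`. -/
def PL (S : List Bool) : Gen :=
  match S.reverse.dropWhile (· = false) with
  | [] => Gen.inv true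
  | _ :: t => Gen.str t.reverse

/-- Right parent: `P_R(ε) = L⁻¹`, `P_R(SL) = S`, `P_R(SR) = P_R(S)`. -/
def PR (S : List Bool) : Gen :=
  match S.reverse.dropWhile (· = true) with
  | [] => Gen.inv false
  | _ :: t => Gen.str t.reverse

/-- Extension of `r` to generalized strings: `r(R⁻¹) = 0`, `r(L⁻¹) = 2`. -/
def rg : Gen → ℚ
  | Gen.inv true => 0
  | Gen.inv false => 2
  | Gen.str S => rval S

/-- Length of a generalized string; the formal symbols have length `-1`. -/
def glen : Gen → ℤ
  | Gen.inv _ => -1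
  | Gen.str S => S.length

/-- Position function: `N(ε) = 0`, `N(SL) = 2N(S)+1`, `N(SR) = 2N(S)+2`. -/
def posN (S : List Bool) : ℕ :=
  ∑ i ∈ Finset.range S.length, (if S.getD i false then 2 else 1) * 2^(S.length - 1 - i)

/-- The alternating-block string `S(k₀,…,k_m) = R^{k₀} L^{k₁} R^{k₂} ⋯`. -/
def blockStr (ks : List ℕ) : List Bool :=
  (ks.zipIdx.map (fun p => List.replicate p.1 (decide (p.2 % 2 = 0)))).flatten

/-- Continued fraction `[q₀,…,q_m]`. -/
def cf : List ℚ → ℚ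
  | [] => 0
  | [q] => q
  | q :: qs => q + (cf qs)⁻¹

/-- Admissible continued-fraction index sequences: `[q₀]` with `q₀ ≥ 1`, or
`[q₀,…,q_m]` with `m ≥ 1`, intermediate `qᵢ ≥ 1`, and `q_m ≥ 2`. -/
def CFAdmissible (qs : List ℕ) : Prop :=
  qs ≠ [] ∧ (qs.length = 1 → 1 ≤ qs.getD 0 0) ∧
    (∀ i, 1 ≤ i → i + 1 < qs.length → 1 ≤ qs.getD i 0) ∧
    (2 ≤ qs.length → 2 ≤ qs.getLastD 0)

/-- The map `f([q₀,…,q_m]) = S(q₀,…,q_{m-1},q_m - 1)`. -/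
def cfToStr (qs : List ℕ) : List Bool :=
  blockStr (qs.dropLast ++ [qs.getLastD 0 - 1])

/-!
Every tail `[k_j,…,k_m]` with `j ≥ 1` has value `> 1`, so the head `k_0` is the integer part of
`[k_0,…,k_m]`. Hence sequences that differ first at index `0` are ordered by their heads, and
for a common head `a` the map `x ↦ a + x⁻¹` reverses the order of the tails, which is what makes
the ordering alternate with the parity of the first index of disagreement.
-/

/-- `CFAdmissible` without the constraints on the head, hence inherited by tails. -/
def CFRegular (ks : List ℕ) : Prop :=
  (∀ i, 1 ≤ i → i + 1 < ks.length → 1 ≤ ks.getD i 0) ∧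
    (2 ≤ ks.length → 2 ≤ ks.getLastD 0)

/-- In `l.map (fun q => (q : ℚ))` without a type on `q`, the coercion elaborates to a lift of `l`
into `List ℚ` through the list monad, followed by `map id`. -/
lemma map_id_coe_eq_map_cast (l : List ℕ) :
    l.map (fun q => (q : ℚ)) = l.map (fun q : ℕ => (q : ℚ)) := by
  simp [map_eq_flatMap]

lemma cf_cons_cons (q x : ℚ) (xs : List ℚ) :
    cf (q :: x :: xs) = q + (cf (x :: xs))⁻¹ := rfl

lemma cf_cons_lt_cf_cons (a : ℚ) {x y : ℚ} {t t' : List ℚ} (hpos : 0 < cf (y :: t'))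
    (h : cf (y :: t') < cf (x :: t)) : cf (a :: x :: t) < cf (a :: y :: t') := by
  simpa only [cf_cons_cons, add_lt_add_iff_left] using inv_strictAnti₀ hpos h

lemma cf_map_cons_cons (a b : ℕ) (t : List ℕ) :
    cf ((a :: b :: t).map (fun q : ℕ => (q : ℚ))) =
      a + (cf ((b :: t).map (fun q : ℕ => (q : ℚ))))⁻¹ := rfl

namespace CFRegular

lemma tail {a b : ℕ} {t : List ℕ} (h : CFRegular (a :: b :: t)) : CFRegular (b :: t) :=
  ⟨fun i hi hlt => by simpa using h.1 (i + 1) (by omega) (by simpa using hlt),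
    fun _ => by simpa [getLastD_cons] using h.2 (by simp)⟩

lemma one_lt_cf_tail {a b : ℕ} {t : List ℕ} (h : CFRegular (a :: b :: t)) :
    1 < cf ((b :: t).map (fun q : ℕ => (q : ℚ))) := by
  induction t generalizing a b with
  | nil =>
    have hb : 2 ≤ b := by simpa using h.2 (by simp)
    simpa [cf] using (show (1 : ℚ) < b by exact_mod_cast hb)
  | cons c t ih =>
    have hb : (1 : ℚ) ≤ b := by exact_mod_cast (by simpa using h.1 1 le_rfl (by simp))
    have htail := ih h.tail
    have hinv : 0 < (cf ((c :: t).map (fun q : ℕ => (q : ℚ))))⁻¹ := by positivity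
    rw [cf_map_cons_cons]
    linarith

lemma head_le_cf {a : ℕ} {t : List ℕ} (h : CFRegular (a :: t)) :
    (a : ℚ) ≤ cf ((a :: t).map (fun q : ℕ => (q : ℚ))) := by
  cases t with
  | nil => simp [cf]
  | cons b t =>
    have hinv : 0 < (cf ((b :: t).map (fun q : ℕ => (q : ℚ))))⁻¹ := by
      have := h.one_lt_cf_tail
      positivity
    rw [cf_map_cons_cons]
    linarith

lemma cf_lt_head_add_one {a : ℕ} {t : List ℕ} (h : CFRegular (a :: t)) :
    cf ((a :: t).map (fun q : ℕ => (q : ℚ))) < a + 1 := by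
  cases t with
  | nil => simp [cf]
  | cons b t =>
    have hinv : (cf ((b :: t).map (fun q : ℕ => (q : ℚ))))⁻¹ < 1 :=
      inv_lt_one_of_one_lt₀ h.one_lt_cf_tail
    rw [cf_map_cons_cons]
    linarith

lemma cf_lt_cf_of_head_lt {a b : ℕ} {t t' : List ℕ} (h : CFRegular (a :: t))
    (h' : CFRegular (b :: t')) (hab : a < b) :
    cf ((a :: t).map (fun q : ℕ => (q : ℚ))) < cf ((b :: t').map (fun q : ℕ => (q : ℚ))) := by
  have hab' : (a : ℚ) + 1 ≤ b := by exact_mod_cast hab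
  linarith [h.cf_lt_head_add_one, h'.head_le_cf]

end CFRegular

theorem stmt16_general (ks ks' : List ℕ)
    (hmid : ∀ i, 1 ≤ i → i + 1 < ks.length → 1 ≤ ks.getD i 0)
    (hmid' : ∀ i, 1 ≤ i → i + 1 < ks'.length → 1 ≤ ks'.getD i 0)
    (hlast : 2 ≤ ks.length → 2 ≤ ks.getLastD 0)
    (hlast' : 2 ≤ ks'.length → 2 ≤ ks'.getLastD 0)
    (i : ℕ) (hi : i < ks.length) (hi' : i < ks'.length)
    (hpre : ∀ j < i, ks.getD j 0 = ks'.getD j 0)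
    (hdiff : (Even i ∧ ks.getD i 0 < ks'.getD i 0) ∨
      (Odd i ∧ ks'.getD i 0 < ks.getD i 0)) :
    cf (ks.map (fun q => (q : ℚ))) < cf (ks'.map (fun q => (q : ℚ))) := by
  rw [map_id_coe_eq_map_cast, map_id_coe_eq_map_cast]
  have hreg : CFRegular ks := ⟨hmid, hlast⟩
  have hreg' : CFRegular ks' := ⟨hmid', hlast'⟩
  clear hmid hmid' hlast hlast'
  induction i generalizing ks ks' with
  | zero =>
    obtain ⟨a, t, rfl⟩ := exists_cons_of_length_pos hi
    obtain ⟨b, t', rfl⟩ := exists_cons_of_length_pos hi'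
    have hab : a < b := by simpa using hdiff
    exact hreg.cf_lt_cf_of_head_lt hreg' hab
  | succ n ih =>
    obtain ⟨a, x, t, rfl⟩ : ∃ a x t, ks = a :: x :: t := by
      rcases ks with _ | ⟨a, _ | ⟨x, t⟩⟩ <;> simp at hi ⊢
    obtain ⟨b, y, t', rfl⟩ : ∃ b y t', ks' = b :: y :: t' := by
      rcases ks' with _ | ⟨b, _ | ⟨y, t'⟩⟩ <;> simp at hi' ⊢
    obtain rfl : a = b := by simpa using hpre 0 n.succ_pos
    have htails : cf ((y :: t').map (fun q : ℕ => (q : ℚ))) <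
        cf ((x :: t).map (fun q : ℕ => (q : ℚ))) :=
      ih (y :: t') (x :: t) (by simpa using hi') (by simpa using hi)
        (fun j hj => by simpa using (hpre (j + 1) (by omega)).symm)
        (by simpa [Nat.even_add_one, Nat.odd_add_one, or_comm] using hdiff)
        hreg'.tail hreg.tail
    exact cf_cons_lt_cf_cons _ (one_pos.trans hreg'.one_lt_cf_tail) htails

/-- The alternating lexicographic ordering of partial-quotient sequences agrees
with the ordering of the rational values of continued fractions: if `kⱼ = k'ⱼ`
for `j < i` and `kᵢ < k'ᵢ` with `i` even, or `kᵢ > k'ᵢ` with `i` odd, then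
`[k₀,…,k_m] < [k'₀,…,k'_n]`. -/
theorem stmt16 (ks ks' : List ℕ) (hne : ks ≠ []) (hne' : ks' ≠ [])
    (hmid : ∀ i, 1 ≤ i → i + 1 < ks.length → 1 ≤ ks.getD i 0)
    (hmid' : ∀ i, 1 ≤ i → i + 1 < ks'.length → 1 ≤ ks'.getD i 0)
    (hlast : 2 ≤ ks.length → 2 ≤ ks.getLastD 0)
    (hlast' : 2 ≤ ks'.length → 2 ≤ ks'.getLastD 0)
    (i : ℕ) (hi : i < ks.length) (hi' : i < ks'.length)
    (hpre : ∀ j < i, ks.getD j 0 = ks'.getD j 0)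
    (hdiff : (Even i ∧ ks.getD i 0 < ks'.getD i 0) ∨
      (Odd i ∧ ks'.getD i 0 < ks.getD i 0)) :
    cf (ks.map (fun q => (q : ℚ))) < cf (ks'.map (fun q => (q : ℚ))) :=
  stmt16_general ks ks' hmid hmid' hlast hlast' i hi hi' hpre hdiff
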